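/- arXiv:1807.05413 — 2 statements merged into one kernel-verified Lean document; each statement's English description precedes it below -/
import Mathlib

section
/- For all integers m, n, k, j ≥ 0, the (dinv, area) q,t-enumerator of doubly decorated reduced polyominoes satisfies RP_{q,t}(m∖(m+1), n)^{∗k,j} = δ_{k,0} · q^{binom(j,2)} · qbinom(m+1, j)_q · qbinom(m+n−j, m)_q, where δ_{k,0} = 1 if k = 0 and 0 otherwise, and binom(j,2) = j(j−1)/2. -/
open Finset

attribute [local instance] Classical.propDecidable

noncomputable section

/-- The ring of polynomials in the two variables `q` and `t` with integer coefficients. -/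
abbrev R2 : Type := MvPolynomial (Fin 2) ℤ

/-- The variable `q`. -/
def qv : R2 := MvPolynomial.X 0

/-- The variable `t`. -/
def tv : R2 := MvPolynomial.X 1

/-- The Gaussian binomial coefficient `[N choose k]_q`, defined via the q-Pascal
recursion `[N+1, k+1]_q = [N, k]_q + q^(k+1) [N, k+1]_q`; it agrees with
`[N]_q! / ([k]_q! [N-k]_q!)` for `0 ≤ k ≤ N` and vanishes for `k > N`. -/
def qBinom : ℕ → ℕ → R2
  | _, 0 => 1
  | 0, _ + 1 => 0
  | N + 1, k + 1 => qBinom N k + qv ^ (k + 1) * qBinom N (k + 1)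

/-- The Gaussian binomial coefficient with integer arguments:
it is `0` unless `0 ≤ k ≤ N`. -/
def qBinomZ (N k : ℤ) : R2 :=
  if 0 ≤ k ∧ k ≤ N then qBinom N.toNat k.toNat else 0

/-! ## Reduced parallelogram polyominoes: area-word model

The letters of the alphabet `0 < 0̄ < 1 < 1̄ < 2 < 2̄ < ⋯` are encoded as
natural numbers: `2v` is the unbarred letter of value `v` and `2v + 1` is the
barred letter of value `v`; the successor in the alphabet is `+1`. -/

/-- Candidate objects: (area word, decorated unbarred rises, decorated barred
rises).  The area word of an `m × n` reduced polyomino has `m + n + 1` letters,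
each bounded by its position. -/
abbrev RPCand (m n : ℕ) :=
  (Fin (m + n + 1) → Fin (2 * (m + n + 1))) ×
    Finset (Fin (m + n + 1)) × Finset (Fin (m + n + 1))

/-- `c` is the area word of an `m × n` reduced polyomino: it starts with the
unbarred letter `0`, whenever a letter is strictly smaller than the next one
the latter is its successor in the alphabet, and it has `m + 1` unbarred
letters and `n` barred letters. -/
def IsRPWord (m n : ℕ) (c : Fin (m + n + 1) → Fin (2 * (m + n + 1))) : Prop :=
  (∀ i, i.1 = 0 → (c i : ℕ) = 0) ∧
    (∀ i j, j.1 = i.1 + 1 → (c j : ℕ) ≤ (c i : ℕ) + 1) ∧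
    (univ.filter fun i => (c i : ℕ) % 2 = 0).card = m + 1 ∧
    (univ.filter fun i => (c i : ℕ) % 2 = 1).card = n

/-- An unbarred rise: an unbarred letter which is the successor (in the
alphabet) of the letter immediately to its left. -/
def IsUnbarredRise {L L' : ℕ} (c : Fin L → Fin L') (i : Fin L) : Prop :=
  (c i : ℕ) % 2 = 0 ∧ ∃ j : Fin L, i.1 = j.1 + 1 ∧ (c i : ℕ) = (c j : ℕ) + 1

/-- A barred rise: a barred letter which is the successor (in the alphabet) of
the letter immediately to its left. -/
def IsBarredRise {L L' : ℕ} (c : Fin L → Fin L') (i : Fin L) : Prop :=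
  (c i : ℕ) % 2 = 1 ∧ ∃ j : Fin L, i.1 = j.1 + 1 ∧ (c i : ℕ) = (c j : ℕ) + 1

/-- Membership in `RP(m∖r, n)^{∗k, j}`: an `m × n` reduced polyomino with `k`
decorated unbarred rises, `j` decorated barred rises, and exactly `r` letters
equal to `0` in its area word (including the initial one). -/
def IsRPstar (m n r k j : ℕ) (x : RPCand m n) : Prop :=
  IsRPWord m n x.1 ∧
    (∀ i ∈ x.2.1, IsUnbarredRise x.1 i) ∧ x.2.1.card = k ∧
    (∀ i ∈ x.2.2, IsBarredRise x.1 i) ∧ x.2.2.card = j ∧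
    (univ.filter fun i => (x.1 i : ℕ) = 0).card = r

/-- The area: the sum of the letters of the area word disregarding bars, not
counting decorated rises of either type. -/
def areaRPstar {m n : ℕ} (x : RPCand m n) : ℕ :=
  ∑ i ∈ univ.filter (fun i => i ∉ x.2.1 ∧ i ∉ x.2.2), (x.1 i : ℕ) / 2

/-- The dinv: the number of pairs `i < j` such that the `i`-th letter of the
area word is the successor, in the alphabet, of the `j`-th letter. -/
def dinvRPstar {m n : ℕ} (x : RPCand m n) : ℕ :=
  (univ.filter fun p : Fin (m + n + 1) × Fin (m + n + 1) =>
    p.1 < p.2 ∧ (x.1 p.1 : ℕ) = (x.1 p.2 : ℕ) + 1).card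

/-- The `(dinv, area)` q,t-enumerator `RP_{q,t}(m∖r, n)^{∗k, j}`;
it is `0` if some parameter is negative. -/
def RPdE (m n r k j : ℤ) : R2 :=
  if 0 ≤ m ∧ 0 ≤ n ∧ 0 ≤ r ∧ 0 ≤ k ∧ 0 ≤ j then
    ∑ x ∈ univ.filter (IsRPstar m.toNat n.toNat r.toNat k.toNat j.toNat),
      qv ^ dinvRPstar x * tv ^ areaRPstar x
  else 0

/-!
When `r = m + 1`, all `m + 1` unbarred letters are `0`; as a letter exceeds its left neighbour by
at most one step, every letter is then `0` or `0̄`. So the area word is a binary word starting with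
`0`, with `m + 1` zeros and `n` bars, area `0` and no unbarred rise; its dinv counts the inversions
`0̄ … 0`, and its barred rises are the factors `0 0̄`, so the decorations contribute
`binom(#rises, j)`. Splitting off the first letter gives a recursion in the length of the word,
and the closed form satisfies the same recursion by the two q-Pascal rules.
-/

lemma qBinom_zero_right (N : ℕ) : qBinom N 0 = 1 := by cases N <;> rfl

lemma qBinom_zero_succ (k : ℕ) : qBinom 0 (k + 1) = 0 := rfl

lemma qBinom_succ_succ (N k : ℕ) :
    qBinom (N + 1) (k + 1) = qBinom N k + qv ^ (k + 1) * qBinom N (k + 1) := rfl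

lemma qBinom_eq_zero_of_lt {N k : ℕ} (h : N < k) : qBinom N k = 0 := by
  induction N generalizing k with
  | zero => obtain ⟨k, rfl⟩ := Nat.exists_eq_add_one.2 h; rfl
  | succ N ih =>
    obtain ⟨k, rfl⟩ := Nat.exists_eq_add_one.2 (Nat.zero_lt_of_lt h)
    rw [qBinom_succ_succ, ih (by omega), ih (by omega), mul_zero, add_zero]

lemma qBinom_succ_succ' {N k : ℕ} (h : k ≤ N) :
    qBinom (N + 1) (k + 1) = qBinom N (k + 1) + qv ^ (N - k) * qBinom N k := by
  induction N generalizing k with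
  | zero =>
    obtain rfl : k = 0 := by omega
    simp [qBinom]
  | succ N ih =>
    rw [qBinom_succ_succ (N + 1)]
    cases k with
    | zero =>
      have := ih (Nat.zero_le N)
      simp only [qBinom_succ_succ, qBinom_zero_right, Nat.sub_zero] at this ⊢
      linear_combination qv * this
    | succ k =>
      rcases Nat.lt_or_ge k N with hk | hk
      · obtain ⟨d, rfl⟩ : ∃ d, N = k + 1 + d := ⟨N - (k + 1), by omega⟩
        have e1 := ih hk
        have e2 := ih hk.le
        rw [show k + 1 + d - (k + 1) = d by omega] at e1
        rw [show k + 1 + d - k = d + 1 by omega] at e2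
        rw [show k + 1 + d + 1 - (k + 1) = d + 1 by omega]
        linear_combination e2 + qv ^ (k + 2) * e1 - qBinom_succ_succ (k + 1 + d) (k + 1) -
          qv ^ (d + 1) * qBinom_succ_succ (k + 1 + d) k
      · obtain rfl : k = N := by omega
        rw [qBinom_eq_zero_of_lt (by omega : k + 1 < k + 1 + 1), Nat.sub_self, pow_zero]
        ring

lemma qBinomZ_natCast (N k : ℕ) : qBinomZ N k = qBinom N k := by
  rw [qBinomZ]
  split_ifs with h
  · simp
  · exact (qBinom_eq_zero_of_lt (by omega)).symm

lemma qBinomZ_natCast_sub (L j a : ℕ) :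
    qBinomZ ((L : ℤ) - j) a = if j ≤ L then qBinom (L - j) a else 0 := by
  split_ifs with h
  · rw [← qBinomZ_natCast, Nat.cast_sub h]
  · rw [qBinomZ, if_neg (by omega)]

lemma sum_fun_fin_succ {α M : Type*} [Fintype α] [AddCommMonoid M] {L : ℕ}
    (f : (Fin (L + 1) → α) → M) :
    ∑ v, f v = ∑ x, ∑ w : Fin L → α, f (Fin.cons x w) := by
  rw [← (Fin.consEquiv fun _ => α).sum_comp, Fintype.sum_prod_type]
  rfl

section BoolWord

variable {L : ℕ}

def zeroCount (w : Fin L → Bool) : ℕ := #{i | w i = false}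

def invCount (w : Fin L → Bool) : ℕ :=
  #{p : Fin L × Fin L | p.1 < p.2 ∧ w p.1 = true ∧ w p.2 = false}

def riseSet (w : Fin L → Bool) : Finset (Fin L) :=
  {i | w i = true ∧ ∃ i' : Fin L, i.1 = i'.1 + 1 ∧ w i' = false}

lemma card_filter_eq_true_add_zeroCount (w : Fin L → Bool) :
    #{i | w i = true} + zeroCount w = L := by
  simpa [zeroCount] using card_filter_add_card_filter_not (s := univ) fun i => w i = true

lemma zeroCount_cons (x : Bool) (w : Fin L → Bool) :
    zeroCount (Fin.cons x w : Fin (L + 1) → Bool) = zeroCount w + (!x).toNat := by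
  simp only [zeroCount, card_filter, Fin.sum_univ_succ, Fin.cons_zero, Fin.cons_succ]
  cases x <;> simp [add_comm]

lemma invCount_cons (x : Bool) (w : Fin L → Bool) :
    invCount (Fin.cons x w : Fin (L + 1) → Bool) = invCount w + x.toNat * zeroCount w := by
  simp only [invCount, zeroCount, card_filter, Fintype.sum_prod_type, Fin.sum_univ_succ,
    Fin.cons_zero, Fin.cons_succ, Fin.succ_lt_succ_iff, Fin.succ_pos,
    Fin.not_lt_zero]
  cases x <;> simp [add_comm]

lemma card_riseSet_cons (x : Bool) (w : Fin L → Bool) :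
    #(riseSet (Fin.cons x w : Fin (L + 1) → Bool)) =
      #(riseSet w) + #({i | i.1 = 0 ∧ x = false ∧ w i = true} : Finset (Fin L)) := by
  simp only [riseSet, card_filter, Fin.sum_univ_succ, Fin.exists_fin_succ, Fin.cons_zero,
    Fin.cons_succ, Fin.val_zero, Fin.val_succ]
  rw [← sum_add_distrib, if_neg (by simp), zero_add]
  refine sum_congr rfl fun i _ => ?_
  by_cases h : i.1 = 0 <;> simp [h, and_comm]

lemma card_riseSet_cons_cons (x y : Bool) (w : Fin L → Bool) :
    #(riseSet (Fin.cons x (Fin.cons y w : Fin (L + 1) → Bool) : Fin (L + 2) → Bool)) =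
      #(riseSet (Fin.cons y w : Fin (L + 1) → Bool)) + (!x && y).toNat := by
  rw [card_riseSet_cons, card_filter, Fin.sum_univ_succ]
  cases x <;> cases y <;> simp

end BoolWord

-- `wordSum p L a j` enumerates the words `p w`; prefixing `true` creates no rise, so
-- `wordSum true` enumerates the words `w` themselves.
def wordSum (p : Bool) (L a j : ℕ) : R2 :=
  ∑ w : Fin L → Bool, if zeroCount w = a then
    ((#(riseSet (Fin.cons p w : Fin (L + 1) → Bool))).choose j : R2) * qv ^ invCount w else 0

lemma wordSum_succ (p : Bool) (L a j : ℕ) :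
    wordSum p (L + 1) a j =
      qv ^ a * ∑ w : Fin L → Bool, (if zeroCount w = a then
        ((#(riseSet (Fin.cons true w : Fin (L + 1) → Bool)) + (!p).toNat).choose j : R2) *
          qv ^ invCount w else 0) +
      ∑ w : Fin L → Bool, if zeroCount w + 1 = a then
        ((#(riseSet (Fin.cons false w : Fin (L + 1) → Bool))).choose j : R2) *
          qv ^ invCount w else 0 := by
  rw [wordSum, sum_fun_fin_succ, Fintype.sum_bool, mul_sum]
  simp only [zeroCount_cons, invCount_cons, card_riseSet_cons_cons, Bool.not_true,
    Bool.not_false, Bool.and_true, Bool.and_false, Bool.toNat_true, Bool.toNat_false, add_zero,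
    one_mul, zero_mul]
  congr 1
  refine sum_congr rfl fun w _ => ?_
  split_ifs with h
  · rw [h, pow_add]; ring
  · rw [mul_zero]

lemma wordSum_zero (p : Bool) (a j : ℕ) : wordSum p 0 a j = if a = 0 ∧ j = 0 then 1 else 0 := by
  have card_of_isEmpty {α : Type} [IsEmpty α] (s : Finset α) : #s = 0 :=
    card_eq_zero.2 s.eq_empty_of_isEmpty
  rw [wordSum, Fintype.sum_unique, card_riseSet_cons, zeroCount, invCount, card_of_isEmpty,
    card_of_isEmpty, card_of_isEmpty, card_of_isEmpty, add_zero, pow_zero, mul_one]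
  rcases Nat.eq_zero_or_pos j with rfl | hj
  · simp [eq_comm]
  · simp [Nat.choose_eq_zero_of_lt hj, hj.ne']

lemma wordSum_false_choose_zero (L a : ℕ) : wordSum false L a 0 = wordSum true L a 0 := by
  simp only [wordSum, Nat.choose_zero_right]

lemma wordSum_true_succ_zero (L j : ℕ) : wordSum true (L + 1) 0 j = wordSum true L 0 j := by
  rw [wordSum_succ]
  simp only [wordSum, Bool.not_true, Bool.toNat_false, add_zero, pow_zero, one_mul,
    Nat.add_one_ne_zero, if_false, sum_const_zero]

lemma wordSum_true_succ_succ (L a j : ℕ) :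
    wordSum true (L + 1) (a + 1) j =
      qv ^ (a + 1) * wordSum true L (a + 1) j + wordSum false L a j := by
  rw [wordSum_succ]
  simp only [wordSum, Bool.not_true, Bool.toNat_false, add_zero, Nat.add_right_cancel_iff]

lemma wordSum_false_succ (L a j : ℕ) :
    wordSum false (L + 1) a (j + 1) =
      wordSum true (L + 1) a (j + 1) + qv ^ a * wordSum true L a j := by
  rw [wordSum_succ, wordSum_succ, add_right_comm, ← mul_add, wordSum, ← sum_add_distrib]
  congr 2
  refine sum_congr rfl fun w _ => ?_
  split_ifs
  · simp only [Bool.not_false, Bool.toNat_true, Bool.not_true, Bool.toNat_false, add_zero,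
      Nat.choose_succ_succ', Nat.cast_add]
    ring
  · rw [add_zero]

-- Without the guard, the truncated `L - j` would give the wrong value `1` at `p = false`,
-- `L = 0`, `a = 0`, `j = 1`.
def wordSumFormula (p : Bool) (L a j : ℕ) : R2 :=
  if j ≤ L then qv ^ j.choose 2 * qBinom (cond p a (a + 1)) j * qBinom (L - j) a else 0

lemma wordSumFormula_zero (p : Bool) (a j : ℕ) :
    wordSumFormula p 0 a j = if a = 0 ∧ j = 0 then 1 else 0 := by
  unfold wordSumFormula
  rcases Nat.eq_zero_or_pos j with rfl | hj
  · cases a <;> simp [qBinom_zero_right, qBinom_zero_succ]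
  · simp [hj.ne']

lemma wordSumFormula_false_choose_zero (L a : ℕ) :
    wordSumFormula false L a 0 = wordSumFormula true L a 0 := by
  simp [wordSumFormula, qBinom_zero_right]

lemma wordSumFormula_true_succ_zero (L j : ℕ) :
    wordSumFormula true (L + 1) 0 j = wordSumFormula true L 0 j := by
  cases j <;> simp [wordSumFormula, qBinom_zero_right, qBinom_zero_succ]

lemma wordSumFormula_true_succ_succ (L a j : ℕ) :
    wordSumFormula true (L + 1) (a + 1) j =
      qv ^ (a + 1) * wordSumFormula true L (a + 1) j + wordSumFormula false L a j := by
  unfold wordSumFormula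
  rcases Nat.lt_or_ge L j with hj | hj
  · simp only [if_neg (show ¬ j ≤ L by omega), mul_zero, add_zero]
    split_ifs
    · rw [show L + 1 - j = 0 by omega, qBinom_zero_succ, mul_zero]
    · rfl
  · obtain ⟨e, rfl⟩ : ∃ e, L = j + e := ⟨L - j, by omega⟩
    simp only [cond_true, cond_false, if_pos hj, if_pos (by omega : j ≤ j + e + 1),
      show j + e + 1 - j = e + 1 by omega, Nat.add_sub_cancel_left, qBinom_succ_succ e a]
    ring

lemma wordSumFormula_false_succ (L a j : ℕ) :
    wordSumFormula false (L + 1) a (j + 1) =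
      wordSumFormula true (L + 1) a (j + 1) + qv ^ a * wordSumFormula true L a j := by
  unfold wordSumFormula
  by_cases hj : j ≤ L
  · simp only [cond_true, cond_false, if_pos hj, if_pos (by omega : j + 1 ≤ L + 1),
      Nat.add_sub_add_right, Nat.choose_succ_succ', Nat.choose_one_right, pow_add]
    rcases Nat.lt_or_ge a j with ha | ha
    · rw [qBinom_eq_zero_of_lt ha, qBinom_eq_zero_of_lt (by omega : a < j + 1),
        qBinom_eq_zero_of_lt (by omega : a + 1 < j + 1)]
      ring
    · obtain ⟨d, rfl⟩ : ∃ d, a = j + d := ⟨a - j, by omega⟩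
      rw [qBinom_succ_succ' ha, Nat.add_sub_cancel_left]
      ring
  · simp [hj, show ¬ j + 1 ≤ L + 1 by omega]

theorem wordSum_eq_formula (L : ℕ) (p : Bool) (a j : ℕ) :
    wordSum p L a j = wordSumFormula p L a j := by
  induction L generalizing p a j with
  | zero => rw [wordSum_zero, wordSumFormula_zero]
  | succ L ih =>
    have htrue (a j : ℕ) : wordSum true (L + 1) a j = wordSumFormula true (L + 1) a j := by
      cases a with
      | zero => rw [wordSum_true_succ_zero, ih, wordSumFormula_true_succ_zero]
      | succ a => rw [wordSum_true_succ_succ, ih, ih, wordSumFormula_true_succ_succ]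
    cases p with
    | true => exact htrue a j
    | false =>
      cases j with
      | zero => rw [wordSum_false_choose_zero, htrue, wordSumFormula_false_choose_zero]
      | succ j => rw [wordSum_false_succ, htrue, ih, wordSumFormula_false_succ]

section AreaWord

variable {L : ℕ}

-- `false ↦ 0` and `true ↦ 0̄`.
def areaWordOfBool (w : Fin L → Bool) : Fin L → Fin (2 * L) :=
  fun i => ⟨(w i).toNat, by have := Bool.toNat_le (w i); have := i.2; omega⟩

@[simp]
lemma val_areaWordOfBool (w : Fin L → Bool) (i : Fin L) :
    (areaWordOfBool w i : ℕ) = (w i).toNat := rfl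

lemma areaWordOfBool_injective : Function.Injective (areaWordOfBool (L := L)) := by
  intro w w' h
  funext i
  have := congrArg (fun c => (c i : ℕ)) h
  simp only [val_areaWordOfBool] at this
  cases hb : w i <;> cases hb' : w' i <;> simp [hb, hb'] at this ⊢

lemma card_filter_areaWordOfBool_eq_zero (w : Fin L → Bool) :
    #{i | (areaWordOfBool w i : ℕ) = 0} = zeroCount w := by
  simp [zeroCount]

lemma not_isUnbarredRise_areaWordOfBool (w : Fin L → Bool) (i : Fin L) :
    ¬ IsUnbarredRise (areaWordOfBool w) i := by
  rintro ⟨heven, i', -, hsucc⟩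
  have := Bool.toNat_le (w i)
  simp only [val_areaWordOfBool] at heven hsucc
  omega

lemma isBarredRise_areaWordOfBool_iff (w : Fin L → Bool) (i : Fin L) :
    IsBarredRise (areaWordOfBool w) i ↔ i ∈ riseSet w := by
  simp only [IsBarredRise, riseSet, mem_filter, mem_univ, true_and, val_areaWordOfBool]
  refine ⟨fun ⟨_, i', hi', hsucc⟩ => ?_,
    fun ⟨h, i', hi', h'⟩ => ⟨by simp [h], i', hi', by simp [h, h']⟩⟩
  have := Bool.toNat_le (w i)
  exact ⟨Bool.toNat_eq_one.1 (by omega), i', hi', Bool.toNat_eq_zero.1 (by omega)⟩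

end AreaWord

section ReducedPolyomino

variable {m n : ℕ}

lemma dinvRPstar_areaWordOfBool (v : Fin (m + n + 1) → Bool) (U D : Finset (Fin (m + n + 1))) :
    dinvRPstar (areaWordOfBool v, U, D) = invCount v := by
  refine congrArg card (filter_congr fun p _ => ?_)
  have := Bool.toNat_le (v p.1)
  have := Bool.toNat_le (v p.2)
  simp only [val_areaWordOfBool, ← Bool.toNat_eq_one, ← Bool.toNat_eq_zero]
  omega

lemma areaRPstar_areaWordOfBool (v : Fin (m + n + 1) → Bool) (U D : Finset (Fin (m + n + 1))) :
    areaRPstar (areaWordOfBool v, U, D) = 0 :=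
  sum_eq_zero fun i _ => Nat.div_eq_of_lt (by have := Bool.toNat_le (v i); simp; omega)

lemma IsRPWord.val_le_one {c : Fin (m + n + 1) → Fin (2 * (m + n + 1))} (hc : IsRPWord m n c)
    (hr : #{i | (c i : ℕ) = 0} = m + 1) (i : Fin (m + n + 1)) : (c i : ℕ) ≤ 1 := by
  have heven : ∀ i, (c i : ℕ) % 2 = 0 → (c i : ℕ) = 0 := by
    have hsub : ({i | (c i : ℕ) = 0} : Finset _) ⊆ ({i | (c i : ℕ) % 2 = 0} : Finset _) :=
      fun i => by simp only [mem_filter, mem_univ, true_and]; omega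
    have heq := eq_of_subset_of_card_le hsub (by rw [hr, hc.2.2.1])
    intro i hi
    have hmem : i ∈ ({i | (c i : ℕ) % 2 = 0} : Finset _) := by simpa using hi
    simpa [← heq] using hmem
  induction i using Fin.induction with
  | zero => rw [hc.1 0 rfl]; omega
  | succ i ih =>
    have hstep := hc.2.1 i.castSucc i.succ (by simp)
    have := heven i.succ
    omega

lemma IsRPWord.exists_eq_areaWordOfBool_cons {c : Fin (m + n + 1) → Fin (2 * (m + n + 1))}
    (hc : IsRPWord m n c) (hr : #{i | (c i : ℕ) = 0} = m + 1) :
    ∃ w : Fin (m + n) → Bool, areaWordOfBool (Fin.cons false w) = c := by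
  refine ⟨fun i => decide ((c i.succ : ℕ) = 1), funext fun i => Fin.ext ?_⟩
  induction i using Fin.cases with
  | zero => simp [hc.1 0 rfl]
  | succ i =>
    have := hc.val_le_one hr i.succ
    by_cases h : (c i.succ : ℕ) = 1
    · simp [h]
    · simp [h]
      omega

lemma isRPWord_areaWordOfBool_cons_iff (w : Fin (m + n) → Bool) :
    IsRPWord m n (areaWordOfBool (Fin.cons false w)) ↔ zeroCount w = m := by
  set v : Fin (m + n + 1) → Bool := Fin.cons false w
  have hzero : zeroCount v = zeroCount w + 1 := zeroCount_cons false w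
  have hones := card_filter_eq_true_add_zeroCount v
  have heven : #{i | (areaWordOfBool v i : ℕ) % 2 = 0} = zeroCount v :=
    congrArg card (filter_congr fun i _ => by cases h : v i <;> simp [h])
  have hodd : #{i | (areaWordOfBool v i : ℕ) % 2 = 1} = #{i | v i = true} :=
    congrArg card (filter_congr fun i _ => by cases h : v i <;> simp [h])
  refine ⟨fun h => by have := h.2.2.1; omega,
    fun h => ⟨fun i hi => ?_, fun i j _ => ?_, by omega, by omega⟩⟩
  · simp [v, show i = 0 from Fin.ext hi]
  · have := Bool.toNat_le (v j)
    simp only [val_areaWordOfBool]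
    omega

lemma isRPstar_areaWordOfBool_cons_iff {k j : ℕ} (w : Fin (m + n) → Bool)
    (U D : Finset (Fin (m + n + 1))) :
    IsRPstar m n (m + 1) k j (areaWordOfBool (Fin.cons false w), U, D) ↔
      zeroCount w = m ∧ (U = ∅ ∧ k = 0) ∧
        D ∈ powersetCard j (riseSet (Fin.cons false w)) := by
  simp only [IsRPstar, isRPWord_areaWordOfBool_cons_iff, not_isUnbarredRise_areaWordOfBool,
    isBarredRise_areaWordOfBool_iff, card_filter_areaWordOfBool_eq_zero, zeroCount_cons,
    mem_powersetCard, ← eq_empty_iff_forall_notMem]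
  constructor
  · rintro ⟨hw, rfl, rfl, hD, hDj, -⟩
    exact ⟨hw, ⟨rfl, card_empty⟩, hD, hDj⟩
  · rintro ⟨hw, ⟨rfl, rfl⟩, hD, hDj⟩
    exact ⟨hw, rfl, card_empty, hD, hDj, by simp [hw]⟩

lemma sum_isRPstar_eq_wordSum (k j : ℕ) :
    ∑ x ∈ univ.filter (IsRPstar m n (m + 1) k j), qv ^ dinvRPstar x * tv ^ areaRPstar x =
      (if k = 0 then 1 else 0) * wordSum false (m + n) m j := by
  rw [sum_filter, Fintype.sum_prod_type, wordSum, mul_sum]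
  simp_rw [Fintype.sum_prod_type]
  symm
  refine Fintype.sum_of_injective (fun w => areaWordOfBool (Fin.cons false w))
    (areaWordOfBool_injective.comp (Fin.cons_right_injective (α := fun _ => Bool) false)) _ _
    (fun c hc => sum_eq_zero fun U _ => sum_eq_zero fun D _ => if_neg fun h =>
      hc (h.1.exists_eq_areaWordOfBool_cons h.2.2.2.2.2)) (fun w => ?_)
  simp only [isRPstar_areaWordOfBool_cons_iff, dinvRPstar_areaWordOfBool,
    areaRPstar_areaWordOfBool, pow_zero, mul_one]
  by_cases hw : zeroCount w = m <;> by_cases hk : k = 0 <;>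
    simp [hw, hk, ite_and, invCount_cons, -mem_powersetCard, sum_ite_mem, card_powersetCard]

end ReducedPolyomino

lemma toNat_mul_sub_one_div_two (j : ℕ) : ((j : ℤ) * (j - 1) / 2).toNat = j.choose 2 := by
  rw [Nat.choose_two_right]
  cases j with
  | zero => rfl
  | succ j =>
    rw [Nat.add_sub_cancel, Nat.cast_succ, add_sub_cancel_right,
      ← Int.toNat_natCast ((j + 1) * j / 2)]
    norm_cast

/-- For `m, n, k, j ≥ 0`, the `(dinv, area)` q,t-enumerator of
doubly decorated reduced polyominoes satisfies
`RP_{q,t}(m∖(m+1), n)^{∗k,j}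
  = δ_{k,0} ⬝ q^(binom j 2) ⬝ [m+1 choose j]_q ⬝ [m+n-j choose m]_q`. -/
theorem RPstar_base (m n k j : ℤ) (hm : 0 ≤ m) (hn : 0 ≤ n) (hk : 0 ≤ k) (hj : 0 ≤ j) :
    RPdE m n (m + 1) k j =
      (if k = 0 then 1 else 0) * qv ^ (j * (j - 1) / 2).toNat *
        qBinomZ (m + 1) j * qBinomZ (m + n - j) m := by
  lift m to ℕ using hm
  lift n to ℕ using hn
  lift k to ℕ using hk
  lift j to ℕ using hj
  rw [RPdE, if_pos (by omega)]
  simp only [Int.toNat_natCast, show ((m : ℤ) + 1).toNat = m + 1 by omega]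
  rw [sum_isRPstar_eq_wordSum, wordSum_eq_formula, wordSumFormula, toNat_mul_sub_one_div_two,
    show (m : ℤ) + 1 = (m + 1 : ℕ) by push_cast; rfl, qBinomZ_natCast,
    show (m : ℤ) + n - j = (m + n : ℕ) - j by push_cast; rfl, qBinomZ_natCast_sub]
  simp only [cond_false, Nat.cast_eq_zero]
  split_ifs <;> ring
end
end

section
/- For every Dyck path D of size n, there is a bijection φ from the set of rises of D to the set of falls of D such that, for every rise i, the number of whole squares between the path and the main diagonal in the row of the i-th vertical step equals the number of whole squares between the path and the main diagonal in the column of the fall φ(i). In particular, the number of rises of a Dyck path equals its number of falls, and the area of D may equivalently be computed as the number of whole squares between the path and the main diagonal excluding those in the columns of the falls corresponding to a chosen set of rises. -/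
open Finset

attribute [local instance] Classical.propDecidable

noncomputable section

/-! ## Dyck paths as step words

A lattice path is encoded as a word `w : Fin L → Bool`, where `true` is a north
step and `false` is an east step. -/

/-- The number of north steps among the first `k` steps. -/
def nBef {L : ℕ} (w : Fin L → Bool) (k : ℕ) : ℕ :=
  (univ.filter fun i : Fin L => i.1 < k ∧ w i = true).card

/-- The number of east steps among the first `k` steps. -/
def eBef {L : ℕ} (w : Fin L → Bool) (k : ℕ) : ℕ :=
  (univ.filter fun i : Fin L => i.1 < k ∧ w i = false).card

/-- `w` is the step word of a Dyck path of size `N`: it has `N` north steps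
(hence `N` east steps) and every prefix has at least as many norths as easts,
i.e. the path stays weakly above the main diagonal. -/
def IsDyckStep (N : ℕ) (w : Fin (2 * N) → Bool) : Prop :=
  nBef w (2 * N) = N ∧ ∀ k : ℕ, k ≤ 2 * N → eBef w k ≤ nBef w k

/-- A valley: a north step directly preceded by an east step. -/
def IsValleyS {L : ℕ} (w : Fin L → Bool) (i : Fin L) : Prop :=
  w i = true ∧ ∃ j : Fin L, i.1 = j.1 + 1 ∧ w j = false

/-- A peak: a north step followed by an east step, or the last (north) step. -/
def IsPeakS {L : ℕ} (w : Fin L → Bool) (i : Fin L) : Prop :=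
  w i = true ∧ ∀ j : Fin L, j.1 = i.1 + 1 → w j = false

/-- A fall: an east step immediately followed by another east step. -/
def IsFallS {L : ℕ} (w : Fin L → Bool) (i : Fin L) : Prop :=
  w i = false ∧ ∃ j : Fin L, j.1 = i.1 + 1 ∧ w j = false

/-- A fall, where additionally the last step of the path is allowed. -/
def IsFallX {L : ℕ} (w : Fin L → Bool) (i : Fin L) : Prop :=
  w i = false ∧ (i.1 + 1 = L ∨ ∃ j : Fin L, j.1 = i.1 + 1 ∧ w j = false)

/-- A rise: a north step directly preceded by another north step. -/
def IsRiseS {L : ℕ} (w : Fin L → Bool) (i : Fin L) : Prop :=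
  w i = true ∧ ∃ j : Fin L, i.1 = j.1 + 1 ∧ w j = true

section DyckAuxiliary

/-- The height of the path before step `k`. -/
def htW {L : ℕ} (w : Fin L → Bool) (k : ℕ) : ℕ := nBef w k - eBef w k

lemma countP_succ {L : ℕ} (p : Fin L → Prop) [DecidablePred p] {k : ℕ} (hk : k < L) :
    (univ.filter fun i : Fin L => i.1 < k + 1 ∧ p i).card =
      (univ.filter fun i : Fin L => i.1 < k ∧ p i).card + (if p ⟨k, hk⟩ then 1 else 0) := by
  have hsplit : (univ.filter fun i : Fin L => i.1 < k + 1 ∧ p i) =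
      (univ.filter fun i : Fin L => i.1 < k ∧ p i) ∪
      (univ.filter fun i : Fin L => i = ⟨k, hk⟩ ∧ p i) := by
    ext i
    simp only [mem_filter, mem_union, mem_univ, true_and]
    constructor
    · rintro ⟨h1, h2⟩
      rcases Nat.lt_succ_iff_lt_or_eq.mp h1 with h | h
      · exact Or.inl ⟨h, h2⟩
      · exact Or.inr ⟨Fin.ext h, h2⟩
    · rintro (⟨h1, h2⟩ | ⟨h1, h2⟩)
      · exact ⟨Nat.lt_succ_of_lt h1, h2⟩
      · subst h1; exact ⟨Nat.lt_succ_self k, h2⟩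
  have hdisj : Disjoint (univ.filter fun i : Fin L => i.1 < k ∧ p i)
      (univ.filter fun i : Fin L => i = ⟨k, hk⟩ ∧ p i) := by
    rw [Finset.disjoint_left]
    rintro i hi hi'
    simp only [mem_filter, mem_univ, true_and] at hi hi'
    rw [hi'.1] at hi
    exact absurd hi.1 (lt_irrefl k)
  rw [hsplit, card_union_of_disjoint hdisj]
  congr 1
  by_cases hp : p ⟨k, hk⟩
  · rw [if_pos hp, Finset.card_eq_one]
    refine ⟨⟨k, hk⟩, ?_⟩
    ext i
    simp only [mem_filter, mem_univ, true_and, mem_singleton]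
    exact ⟨fun h => h.1, fun h => ⟨h, h ▸ hp⟩⟩
  · rw [if_neg hp, Finset.card_eq_zero]
    ext i
    simp only [mem_filter, mem_univ, true_and, notMem_empty, iff_false]
    rintro ⟨rfl, h2⟩
    exact hp h2

lemma nBef_zero {L : ℕ} (w : Fin L → Bool) : nBef w 0 = 0 := by simp [nBef]

lemma eBef_zero {L : ℕ} (w : Fin L → Bool) : eBef w 0 = 0 := by simp [eBef]

lemma nBef_succ {L : ℕ} (w : Fin L → Bool) (i : Fin L) :
    nBef w (i.1 + 1) = nBef w i.1 + (if w i = true then 1 else 0) :=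
  countP_succ (fun i => w i = true) i.2

lemma eBef_succ {L : ℕ} (w : Fin L → Bool) (i : Fin L) :
    eBef w (i.1 + 1) = eBef w i.1 + (if w i = false then 1 else 0) :=
  countP_succ (fun i => w i = false) i.2

lemma nBef_add_eBef {L : ℕ} (w : Fin L → Bool) : ∀ k, k ≤ L → nBef w k + eBef w k = k := by
  intro k
  induction k with
  | zero => intro _; simp [nBef_zero, eBef_zero]
  | succ m ih =>
    intro hm
    have hmL : m < L := hm
    have h1 := nBef_succ w ⟨m, hmL⟩
    have h2 := eBef_succ w ⟨m, hmL⟩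
    simp only [Fin.val_mk] at h1 h2 ⊢
    have := ih (le_of_lt hmL)
    cases h : w ⟨m, hmL⟩ <;> rw [h] at h1 h2 <;> simp at h1 h2 <;> omega

section Dyck

variable {n : ℕ} {w : Fin (2 * n) → Bool}

lemma eBef_le (hw : IsDyckStep n w) {k : ℕ} (hk : k ≤ 2 * n) : eBef w k ≤ nBef w k :=
  hw.2 k hk

lemma htW_zero : htW w 0 = 0 := by simp [htW, nBef_zero, eBef_zero]

lemma htW_true (hw : IsDyckStep n w) (i : Fin (2 * n)) (h : w i = true) :
    htW w (i.1 + 1) = htW w i.1 + 1 := by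
  have h1 := nBef_succ w i
  have h2 := eBef_succ w i
  rw [h] at h1 h2
  simp at h1 h2
  have h4 := eBef_le hw (le_of_lt i.2)
  unfold htW
  omega

lemma htW_false (hw : IsDyckStep n w) (i : Fin (2 * n)) (h : w i = false) :
    htW w i.1 = htW w (i.1 + 1) + 1 := by
  have h1 := nBef_succ w i
  have h2 := eBef_succ w i
  rw [h] at h1 h2
  simp at h1 h2
  have h4 : eBef w (i.1 + 1) ≤ nBef w (i.1 + 1) := eBef_le hw i.2
  have h5 := eBef_le hw (le_of_lt i.2)
  unfold htW
  omega

lemma htW_false_pos (hw : IsDyckStep n w) (i : Fin (2 * n)) (h : w i = false) :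
    1 ≤ htW w i.1 := by
  rw [htW_false hw i h]; omega

lemma htW_last (hw : IsDyckStep n w) : htW w (2 * n) = 0 := by
  have h1 := hw.1
  have h2 := nBef_add_eBef w (2 * n) le_rfl
  unfold htW
  omega

lemma crossing (hw : IsDyckStep n w) (c : ℕ) :
    ∀ k, k ≤ 2 * n →
    (univ.filter fun i : Fin (2 * n) => i.1 < k ∧ (w i = true ∧ htW w i.1 = c)).card =
      (univ.filter fun i : Fin (2 * n) => i.1 < k ∧ (w i = false ∧ htW w i.1 = c + 1)).card +
        (if c < htW w k then 1 else 0) := by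
  intro k
  induction k with
  | zero => intro _; simp [htW_zero]
  | succ m ih =>
    intro hm
    have hmL : m < 2 * n := hm
    have ihm := ih (le_of_lt hmL)
    rw [countP_succ (fun i => w i = true ∧ htW w i.1 = c) hmL,
      countP_succ (fun i => w i = false ∧ htW w i.1 = c + 1) hmL]
    simp only [Fin.val_mk]
    cases hwj : w ⟨m, hmL⟩ with
    | true =>
      have hstep := htW_true hw ⟨m, hmL⟩ hwj
      simp only [Fin.val_mk] at hstep
      rw [hstep]
      simp only [hwj, true_and, false_and, if_false, Bool.true_eq_false]
      split_ifs at ihm ⊢ <;> omega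
    | false =>
      have hstep := htW_false hw ⟨m, hmL⟩ hwj
      simp only [Fin.val_mk] at hstep
      simp only [hwj, true_and, false_and, if_false, Bool.false_eq_true]
      split_ifs at ihm ⊢ <;> omega

lemma card_up_eq_dn (hw : IsDyckStep n w) (c : ℕ) :
    (univ.filter fun i : Fin (2 * n) => w i = true ∧ htW w i.1 = c).card =
      (univ.filter fun i : Fin (2 * n) => w i = false ∧ htW w i.1 = c + 1).card := by
  have h := crossing hw c (2 * n) le_rfl
  rw [htW_last hw] at h
  simp only [Nat.not_lt_zero, if_false] at h
  have e1 : (univ.filter fun i : Fin (2 * n) => i.1 < 2 * n ∧ (w i = true ∧ htW w i.1 = c)) =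
      (univ.filter fun i : Fin (2 * n) => w i = true ∧ htW w i.1 = c) := by
    apply filter_congr; intro i _; simp [i.2]
  have e2 : (univ.filter fun i : Fin (2 * n) =>
        i.1 < 2 * n ∧ (w i = false ∧ htW w i.1 = c + 1)) =
      (univ.filter fun i : Fin (2 * n) => w i = false ∧ htW w i.1 = c + 1) := by
    apply filter_congr; intro i _; simp [i.2]
  rw [e1, e2] at h
  omega

/-- Rises at height `c`. -/
def riseC (w : Fin (2 * n) → Bool) (c : ℕ) : Finset (Fin (2 * n)) :=
  univ.filter fun i => IsRiseS w i ∧ htW w i.1 = c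

/-- Falls whose column height is `c` (path height `c + 1`). -/
def fallC (w : Fin (2 * n) → Bool) (c : ℕ) : Finset (Fin (2 * n)) :=
  univ.filter fun i => IsFallS w i ∧ htW w i.1 = c + 1

/-- North steps at height `c` that are not rises. -/
def nupC (w : Fin (2 * n) → Bool) (c : ℕ) : Finset (Fin (2 * n)) :=
  univ.filter fun i => w i = true ∧ ¬ IsRiseS w i ∧ htW w i.1 = c

/-- East steps at path height `c + 1` that are not falls. -/
def ndnC (w : Fin (2 * n) → Bool) (c : ℕ) : Finset (Fin (2 * n)) :=
  univ.filter fun i => w i = false ∧ ¬ IsFallS w i ∧ htW w i.1 = c + 1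

lemma rise_ht_pos (hw : IsDyckStep n w) {i : Fin (2 * n)} (h : IsRiseS w i) :
    1 ≤ htW w i.1 := by
  obtain ⟨h1, j, hj1, hj2⟩ := h
  have := htW_true hw j hj2
  rw [← hj1] at this
  omega

lemma fall_next (hw : IsDyckStep n w) {i : Fin (2 * n)} (h : IsFallS w i) :
    2 ≤ htW w i.1 := by
  obtain ⟨h1, j, hj1, hj2⟩ := h
  have hstep := htW_false hw i h1
  have hpos := htW_false_pos hw j hj2
  rw [hj1] at hpos
  omega

lemma riseC_zero (hw : IsDyckStep n w) : riseC w 0 = ∅ := by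
  ext i
  simp only [riseC, mem_filter, mem_univ, true_and, notMem_empty, iff_false]
  rintro ⟨h1, h2⟩
  have := rise_ht_pos hw h1
  omega

lemma fallC_zero (hw : IsDyckStep n w) : fallC w 0 = ∅ := by
  ext i
  simp only [fallC, mem_filter, mem_univ, true_and, notMem_empty, iff_false]
  rintro ⟨h1, h2⟩
  have := fall_next hw h1
  omega

lemma up_split (w : Fin (2 * n) → Bool) (c : ℕ) :
    (univ.filter fun i : Fin (2 * n) => w i = true ∧ htW w i.1 = c) =
      riseC w c ∪ nupC w c := by
  ext i
  simp only [mem_filter, mem_univ, true_and, mem_union, riseC, nupC]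
  constructor
  · rintro ⟨h1, h2⟩
    by_cases hr : IsRiseS w i
    · exact Or.inl ⟨hr, h2⟩
    · exact Or.inr ⟨h1, hr, h2⟩
  · rintro (⟨h1, h2⟩ | ⟨h1, h2, h3⟩)
    · exact ⟨h1.1, h2⟩
    · exact ⟨h1, h3⟩

lemma dn_split (w : Fin (2 * n) → Bool) (c : ℕ) :
    (univ.filter fun i : Fin (2 * n) => w i = false ∧ htW w i.1 = c + 1) =
      fallC w c ∪ ndnC w c := by
  ext i
  simp only [mem_filter, mem_univ, true_and, mem_union, fallC, ndnC]
  constructor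
  · rintro ⟨h1, h2⟩
    by_cases hr : IsFallS w i
    · exact Or.inl ⟨hr, h2⟩
    · exact Or.inr ⟨h1, hr, h2⟩
  · rintro (⟨h1, h2⟩ | ⟨h1, h2, h3⟩)
    · exact ⟨h1.1, h2⟩
    · exact ⟨h1, h3⟩

lemma up_disj (w : Fin (2 * n) → Bool) (c : ℕ) : Disjoint (riseC w c) (nupC w c) := by
  rw [Finset.disjoint_left]
  intro i hi hi'
  simp only [riseC, nupC, mem_filter, mem_univ, true_and] at hi hi'
  exact hi'.2.1 hi.1

lemma dn_disj (w : Fin (2 * n) → Bool) (c : ℕ) : Disjoint (fallC w c) (ndnC w c) := by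
  rw [Finset.disjoint_left]
  intro i hi hi'
  simp only [fallC, ndnC, mem_filter, mem_univ, true_and] at hi hi'
  exact hi'.2.1 hi.1

lemma card_split (hw : IsDyckStep n w) (c : ℕ) :
    (riseC w c).card + (nupC w c).card = (fallC w c).card + (ndnC w c).card := by
  have h := card_up_eq_dn hw c
  rw [up_split w c, dn_split w c, card_union_of_disjoint (up_disj w c),
    card_union_of_disjoint (dn_disj w c)] at h
  exact h

lemma card_nup_eq_ndn (hw : IsDyckStep n w) (c : ℕ) :
    (nupC w c).card = (ndnC w c).card := by
  cases c with
  | zero =>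
    have h := card_split hw 0
    rw [riseC_zero hw, fallC_zero hw] at h
    simpa using h
  | succ c =>
    apply Finset.card_bij (fun i _ => (⟨i.1 - 1, by omega⟩ : Fin (2 * n)))
    · -- maps into ndnC
      intro i hi
      simp only [nupC, mem_filter, mem_univ, true_and] at hi
      obtain ⟨hit, hnr, hht⟩ := hi
      have hipos : 1 ≤ i.1 := by
        by_contra h
        have hi0 : i.1 = 0 := by omega
        rw [hi0, htW_zero] at hht
        omega
      have key : ∀ j : Fin (2 * n), j.1 = i.1 - 1 → j ∈ ndnC w (c + 1) := by
        intro j hjval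
        have hji : i.1 = j.1 + 1 := by omega
        have hjf : w j = false := by
          by_contra h
          have hjt : w j = true := by
            cases hwq : w j
            · exact absurd hwq h
            · rfl
          exact hnr ⟨hit, j, hji, hjt⟩
        have hstep := htW_false hw j hjf
        rw [← hji] at hstep
        simp only [ndnC, mem_filter, mem_univ, true_and]
        refine ⟨hjf, ?_, by omega⟩
        rintro ⟨-, j', hj'1, hj'2⟩
        have : j' = i := Fin.ext (by omega)
        rw [this, hit] at hj'2
        exact absurd hj'2 (by simp)
      exact key _ rfl
    · -- injective
      intro i hi i' hi' heq
      simp only [nupC, mem_filter, mem_univ, true_and] at hi hi'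
      have hipos : 1 ≤ i.1 := by
        by_contra h
        have hi0 : i.1 = 0 := by omega
        rw [hi0, htW_zero] at hi
        omega
      have hipos' : 1 ≤ i'.1 := by
        by_contra h
        have hi0 : i'.1 = 0 := by omega
        rw [hi0, htW_zero] at hi'
        omega
      have h2 : i.1 - 1 = i'.1 - 1 := congrArg Fin.val heq
      exact Fin.ext (by omega)
    · -- surjective
      intro j hj
      simp only [ndnC, mem_filter, mem_univ, true_and] at hj
      obtain ⟨hjf, hnf, hht⟩ := hj
      have hstep := htW_false hw j hjf
      have hlt : j.1 + 1 < 2 * n := by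
        rcases Nat.lt_or_ge (j.1 + 1) (2 * n) with h | h
        · exact h
        · exfalso
          have hje : j.1 + 1 = 2 * n := by have := j.2; omega
          rw [hje, htW_last hw] at hstep
          omega
      refine ⟨⟨j.1 + 1, hlt⟩, ?_, Fin.ext (show j.1 + 1 - 1 = j.1 by omega)⟩
      have key : ∀ i : Fin (2 * n), i.1 = j.1 + 1 → i ∈ nupC w (c + 1) := by
        intro i hival
        have hit : w i = true := by
          by_contra h
          have hif : w i = false := by
            cases hwq : w i
            · rfl
            · exact absurd hwq h
          exact hnf ⟨hjf, i, hival, hif⟩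
        simp only [nupC, mem_filter, mem_univ, true_and]
        have hsi : htW w i.1 = c + 1 := by
          rw [hival]
          omega
        refine ⟨hit, ?_, hsi⟩
        rintro ⟨-, j', hj'1, hj'2⟩
        have : j' = j := Fin.ext (by omega)
        rw [this, hjf] at hj'2
        exact absurd hj'2 (by simp)
      exact key _ rfl

lemma card_rise_eq_fall (hw : IsDyckStep n w) (c : ℕ) :
    (riseC w c).card = (fallC w c).card := by
  have h1 := card_split hw c
  have h2 := card_nup_eq_ndn hw c
  omega

/-- Glue two equivalences of finsets into a function, used piecewise. -/
def pairF {α : Type*} [DecidableEq α] (s t s' t' : Finset α)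
    (e : {x // x ∈ s} ≃ {x // x ∈ t}) (e' : {x // x ∈ s'} ≃ {x // x ∈ t'}) : α → α :=
  fun i => if h : i ∈ s then (e ⟨i, h⟩).1 else if h' : i ∈ s' then (e' ⟨i, h'⟩).1 else i

section PairF

variable {α : Type*} [DecidableEq α] {s t s' t' : Finset α}
  {e : {x // x ∈ s} ≃ {x // x ∈ t}} {e' : {x // x ∈ s'} ≃ {x // x ∈ t'}}

lemma pairF_mem1 {i : α} (h : i ∈ s) : pairF s t s' t' e e' i ∈ t := by
  unfold pairF
  rw [dif_pos h]
  exact (e ⟨i, h⟩).2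

lemma pairF_mem2 {i : α} (h : i ∉ s) (h' : i ∈ s') : pairF s t s' t' e e' i ∈ t' := by
  unfold pairF
  rw [dif_neg h, dif_pos h']
  exact (e' ⟨i, h'⟩).2

lemma pairF_inj1 {i i' : α} (h : i ∈ s) (h' : i' ∈ s)
    (heq : pairF s t s' t' e e' i = pairF s t s' t' e e' i') : i = i' := by
  unfold pairF at heq
  rw [dif_pos h, dif_pos h'] at heq
  have := e.injective (Subtype.ext heq)
  exact congrArg Subtype.val this

lemma pairF_inj2 {i i' : α} (h : i ∉ s) (h2 : i ∈ s') (h' : i' ∉ s) (h2' : i' ∈ s')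
    (heq : pairF s t s' t' e e' i = pairF s t s' t' e e' i') : i = i' := by
  unfold pairF at heq
  rw [dif_neg h, dif_pos h2, dif_neg h', dif_pos h2'] at heq
  have := e'.injective (Subtype.ext heq)
  exact congrArg Subtype.val this

lemma pairF_surj1 {j : α} (hj : j ∈ t) :
    ∃ i, i ∈ s ∧ pairF s t s' t' e e' i = j := by
  refine ⟨(e.symm ⟨j, hj⟩).1, (e.symm ⟨j, hj⟩).2, ?_⟩
  unfold pairF
  rw [dif_pos (e.symm ⟨j, hj⟩).2]
  exact congrArg Subtype.val (e.apply_symm_apply ⟨j, hj⟩)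

lemma pairF_surj2 {j : α} (hd : ∀ x, x ∈ s' → x ∉ s) (hj : j ∈ t') :
    ∃ i, i ∈ s' ∧ pairF s t s' t' e e' i = j := by
  refine ⟨(e'.symm ⟨j, hj⟩).1, (e'.symm ⟨j, hj⟩).2, ?_⟩
  unfold pairF
  rw [dif_neg (hd _ (e'.symm ⟨j, hj⟩).2), dif_pos (e'.symm ⟨j, hj⟩).2]
  exact congrArg Subtype.val (e'.apply_symm_apply ⟨j, hj⟩)

end PairF

/-- The bijection from rises to falls, extended to a map on all steps sending all
north steps to east steps one level higher. -/
def phiW (hw : IsDyckStep n w) : Fin (2 * n) → Fin (2 * n) :=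
  fun i => pairF (riseC w (htW w i.1)) (fallC w (htW w i.1))
    (nupC w (htW w i.1)) (ndnC w (htW w i.1))
    (Finset.equivOfCardEq (card_rise_eq_fall hw (htW w i.1)))
    (Finset.equivOfCardEq (card_nup_eq_ndn hw (htW w i.1))) i

lemma nup_not_rise {c : ℕ} : ∀ x, x ∈ nupC w c → x ∉ riseC w c := by
  intro x hx hx'
  simp only [nupC, riseC, mem_filter, mem_univ, true_and] at hx hx'
  exact hx.2.1 hx'.1

lemma phiW_eq (hw : IsDyckStep n w) (i : Fin (2 * n)) (c : ℕ) (hlev : htW w i.1 = c) :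
    phiW hw i = pairF (riseC w c) (fallC w c) (nupC w c) (ndnC w c)
      (Finset.equivOfCardEq (card_rise_eq_fall hw c))
      (Finset.equivOfCardEq (card_nup_eq_ndn hw c)) i := by
  subst hlev
  rfl

lemma phiW_true (hw : IsDyckStep n w) (i : Fin (2 * n)) (h : w i = true) :
    w (phiW hw i) = false ∧ htW w (phiW hw i).1 = htW w i.1 + 1 ∧
      (IsRiseS w i → IsFallS w (phiW hw i)) ∧ (¬ IsRiseS w i → ¬ IsFallS w (phiW hw i)) := by
  by_cases hr : IsRiseS w i
  · have hmem : i ∈ riseC w (htW w i.1) := by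
      exact mem_filter.mpr ⟨mem_univ _, hr, rfl⟩
    have h2 : phiW hw i ∈ fallC w (htW w i.1) := pairF_mem1 hmem
    simp only [fallC, mem_filter, mem_univ, true_and] at h2
    exact ⟨h2.1.1, h2.2, fun _ => h2.1, fun hnr => absurd hr hnr⟩
  · have hnmem : i ∉ riseC w (htW w i.1) := by
      simp only [riseC, mem_filter, mem_univ, true_and]
      rintro ⟨hr', -⟩; exact hr hr'
    have hmem : i ∈ nupC w (htW w i.1) := by
      exact mem_filter.mpr ⟨mem_univ _, h, hr, rfl⟩
    have h2 : phiW hw i ∈ ndnC w (htW w i.1) := pairF_mem2 hnmem hmem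
    simp only [ndnC, mem_filter, mem_univ, true_and] at h2
    exact ⟨h2.1, h2.2.2, fun hr' => absurd hr' hr, fun _ => h2.2.1⟩

lemma phiW_inj (hw : IsDyckStep n w) (i i' : Fin (2 * n)) (h : w i = true) (h' : w i' = true)
    (heq : phiW hw i = phiW hw i') : i = i' := by
  have t1 := phiW_true hw i h
  have t2 := phiW_true hw i' h'
  have hc : htW w i.1 = htW w i'.1 := by
    have a1 := t1.2.1
    have a2 := t2.2.1
    rw [heq] at a1
    omega
  by_cases hr : IsRiseS w i
  · by_cases hr' : IsRiseS w i'
    · have hmem : i ∈ riseC w (htW w i.1) := by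
        exact mem_filter.mpr ⟨mem_univ _, hr, rfl⟩
      have hmem' : i' ∈ riseC w (htW w i.1) := by
        simp only [riseC, mem_filter, mem_univ, true_and]; exact ⟨hr', hc.symm⟩
      have heq2 := heq
      rw [phiW_eq hw i (htW w i.1) rfl, phiW_eq hw i' (htW w i.1) hc.symm] at heq2
      exact pairF_inj1 hmem hmem' heq2
    · exfalso
      have := t2.2.2.2 hr'
      rw [← heq] at this
      exact this (t1.2.2.1 hr)
  · by_cases hr' : IsRiseS w i'
    · exfalso
      have := t1.2.2.2 hr
      rw [heq] at this
      exact this (t2.2.2.1 hr')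
    · have hnmem : i ∉ riseC w (htW w i.1) := by
        simp only [riseC, mem_filter, mem_univ, true_and]
        rintro ⟨hr2, -⟩; exact hr hr2
      have hnmem' : i' ∉ riseC w (htW w i.1) := by
        simp only [riseC, mem_filter, mem_univ, true_and]
        rintro ⟨hr2, -⟩; exact hr' hr2
      have hmem : i ∈ nupC w (htW w i.1) := by
        exact mem_filter.mpr ⟨mem_univ _, h, hr, rfl⟩
      have hmem' : i' ∈ nupC w (htW w i.1) := by
        simp only [nupC, mem_filter, mem_univ, true_and]; exact ⟨h', hr', hc.symm⟩
      have heq2 := heq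
      rw [phiW_eq hw i (htW w i.1) rfl, phiW_eq hw i' (htW w i.1) hc.symm] at heq2
      exact pairF_inj2 hnmem hmem hnmem' hmem' heq2

lemma phiW_surj (hw : IsDyckStep n w) (j : Fin (2 * n)) (hj : w j = false) :
    ∃ i, w i = true ∧ phiW hw i = j := by
  have hpos := htW_false_pos hw j hj
  obtain ⟨c, hc⟩ : ∃ c, htW w j.1 = c + 1 := ⟨htW w j.1 - 1, by omega⟩
  by_cases hf : IsFallS w j
  · have hjm : j ∈ fallC w c := by
      simp only [fallC, mem_filter, mem_univ, true_and]; exact ⟨hf, hc⟩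
    obtain ⟨i, hi, hpf⟩ := pairF_surj1 (s' := nupC w c) (t' := ndnC w c)
      (e := Finset.equivOfCardEq (card_rise_eq_fall hw c))
      (e' := Finset.equivOfCardEq (card_nup_eq_ndn hw c)) hjm
    have hmem := hi
    simp only [riseC, mem_filter, mem_univ, true_and] at hmem
    refine ⟨i, hmem.1.1, ?_⟩
    have hlev : htW w i.1 = c := hmem.2
    rw [phiW_eq hw i c hlev]
    exact hpf
  · have hjm : j ∈ ndnC w c := by
      simp only [ndnC, mem_filter, mem_univ, true_and]; exact ⟨hj, hf, hc⟩
    obtain ⟨i, hi, hpf⟩ := pairF_surj2 (s := riseC w c) (t := fallC w c)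
      (e := Finset.equivOfCardEq (card_rise_eq_fall hw c))
      (e' := Finset.equivOfCardEq (card_nup_eq_ndn hw c)) nup_not_rise hjm
    have hmem := hi
    simp only [nupC, mem_filter, mem_univ, true_and] at hmem
    refine ⟨i, hmem.1, ?_⟩
    have hlev : htW w i.1 = c := hmem.2.2
    rw [phiW_eq hw i c hlev]
    exact hpf

end Dyck
end DyckAuxiliary

/-- For every Dyck path of size `n`, there is a bijection `φ`
from its rises to its falls such that the number of whole squares between the
path and the main diagonal in the row of a rise `i` (namely
`nBef w i - eBef w i`) equals the number of such squares in the column of the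
fall `φ i` (namely `nBef w (φ i) - eBef w (φ i) - 1`).  In particular the
number of rises equals the number of falls, and for every choice `S` of
decorated rises the area may be computed equivalently by rows (omitting the
rows of `S`) or by columns (omitting the columns of the falls `φ '' S`). -/
theorem rises_falls_bijection (n : ℕ) (w : Fin (2 * n) → Bool) (hw : IsDyckStep n w) :
    ∃ φ : Fin (2 * n) → Fin (2 * n),
      Set.BijOn φ {i | IsRiseS w i} {i | IsFallS w i} ∧
        (∀ i, IsRiseS w i →
          nBef w i.1 - eBef w i.1 = nBef w (φ i).1 - eBef w (φ i).1 - 1) ∧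
        ∀ S : Finset (Fin (2 * n)), (∀ i ∈ S, IsRiseS w i) →
          ∑ i ∈ univ.filter (fun i => w i = true ∧ i ∉ S),
              (nBef w i.1 - eBef w i.1) =
            ∑ i ∈ univ.filter (fun i => w i = false ∧ i ∉ S.image φ),
              (nBef w i.1 - eBef w i.1 - 1) := by
  refine ⟨phiW hw, ⟨?_, ?_, ?_⟩, ?_, ?_⟩
  · -- MapsTo
    intro i hi
    exact (phiW_true hw i hi.1).2.2.1 hi
  · -- InjOn
    intro i hi i' hi' heq
    exact phiW_inj hw i i' hi.1 hi'.1 heq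
  · -- SurjOn
    intro j hj
    obtain ⟨i, hit, hphi⟩ := phiW_surj hw j hj.1
    have hir : IsRiseS w i := by
      by_contra hnr
      have := (phiW_true hw i hit).2.2.2 hnr
      rw [hphi] at this
      exact this hj
    exact ⟨i, hir, hphi⟩
  · -- value condition
    intro i hi
    have h := (phiW_true hw i hi.1).2.1
    show htW w i.1 = htW w (phiW hw i).1 - 1
    omega
  · -- sum condition
    intro S hS
    apply Finset.sum_bij (fun i _ => phiW hw i)
    · intro a ha
      simp only [mem_filter, mem_univ, true_and] at ha ⊢
      obtain ⟨hat, haS⟩ := ha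
      refine ⟨(phiW_true hw a hat).1, ?_⟩
      intro hmem
      obtain ⟨s0, hs0S, hs0eq⟩ := Finset.mem_image.mp hmem
      have hs0t : w s0 = true := (hS s0 hs0S).1
      have := phiW_inj hw s0 a hs0t hat hs0eq
      rw [this] at hs0S
      exact haS hs0S
    · intro a ha a' ha' heq
      simp only [mem_filter, mem_univ, true_and] at ha ha'
      exact phiW_inj hw a a' ha.1 ha'.1 heq
    · intro j hj
      simp only [mem_filter, mem_univ, true_and] at hj
      obtain ⟨hjf, hjim⟩ := hj
      obtain ⟨i, hit, hphi⟩ := phiW_surj hw j hjf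
      have hiS : i ∉ S := by
        intro hiS
        exact hjim (Finset.mem_image.mpr ⟨i, hiS, hphi⟩)
      exact ⟨i, by simp only [mem_filter, mem_univ, true_and]; exact ⟨hit, hiS⟩, hphi⟩
    · intro a ha
      simp only [mem_filter, mem_univ, true_and] at ha
      have h := (phiW_true hw a ha.1).2.1
      show htW w a.1 = htW w (phiW hw a).1 - 1
      omega
end
end
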